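/- Let S ∈ O²(M) be an associative product in the endomorphism operad of an object of an additive monoidal category, and O_def a deformation operad for S. Then γ ∈ O_def² satisfies (1/2)[γ,γ] = 0 if and only if dγ + γ(γ, S₀¹) − γ(S₀¹, γ) = 0, where d is the Hochschild differential dF = [0₂, F] and the compositions on the right are those of the ambient endomorphism operad. -/

import Mathlib

universe u

section SigmaFin

/-- Splitting off the first summand of a sigma type over `Fin (n+1)`. -/
def sigmaFinSucc {n : ℕ} (β : Fin (n + 1) → Type u) :
    (Σ i, β i) ≃ β 0 ⊕ (Σ i : Fin n, β i.succ) where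
  toFun p := Fin.cases (motive := fun i => β i → β 0 ⊕ (Σ i : Fin n, β i.succ))
    (fun b => Sum.inl b) (fun i b => Sum.inr ⟨i, b⟩) p.1 p.2
  invFun s := match s with
    | Sum.inl b => ⟨0, b⟩
    | Sum.inr ⟨i, b⟩ => ⟨i.succ, b⟩
  left_inv := by
    rintro ⟨i, b⟩
    induction i using Fin.cases <;> simp
  right_inv := by
    rintro (b | ⟨i, b⟩) <;> simp

/-- The order-preserving equivalence `(Σ i, Fin (ks i)) ≃ Fin (∑ i, ks i)`. -/
def sigmaFinEquiv : ∀ {n : ℕ} (ks : Fin n → ℕ), (Σ i, Fin (ks i)) ≃ Fin (∑ i, ks i)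
  | 0, ks =>
      (Equiv.equivOfIsEmpty _ (Fin 0)).trans (finCongr (by simp))
  | (n + 1), ks =>
      (sigmaFinSucc fun i => Fin (ks i)).trans <|
        (Equiv.sumCongr (Equiv.refl (Fin (ks 0))) (sigmaFinEquiv fun i => ks i.succ)).trans <|
          finSumFinEquiv.trans (finCongr (Fin.sum_univ_succ ks).symm)

lemma sigmaFin_sum_eq {n : ℕ} (ks : Fin n → ℕ) (ms : ∀ i, Fin (ks i) → ℕ) :
    (∑ j : Fin (∑ i, ks i),
        ms ((sigmaFinEquiv ks).symm j).1 ((sigmaFinEquiv ks).symm j).2)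
      = ∑ i, ∑ j, ms i j := by
  have h := Fintype.sum_equiv (sigmaFinEquiv ks).symm
    (fun j => ms ((sigmaFinEquiv ks).symm j).1 ((sigmaFinEquiv ks).symm j).2)
    (fun p : Σ i, Fin (ks i) => ms p.1 p.2) (fun j => rfl)
  rw [h, ← Finset.univ_sigma_univ, Finset.sum_sigma]

end SigmaFin

/-- A linear operad: an operad in the category of vector spaces over `k`.  Each space
`A n` is a `k`-vector space and the operadic compositions are multilinear. -/
structure LinearOperad (k : Type) [Field k] (A : ℕ → Type u)
    [∀ n, AddCommGroup (A n)] [∀ n, Module k (A n)] where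
  comp : ∀ {n : ℕ} (ks : Fin n → ℕ), A n → (∀ i, A (ks i)) → A (∑ i, ks i)
  unit : A 1
  comp_unit : ∀ {n : ℕ} (F : A n),
    cast (congrArg A (by simp : (∑ _i : Fin n, 1) = n))
      (comp (fun _ => 1) F (fun _ => unit)) = F
  assoc : ∀ {n : ℕ} (ks : Fin n → ℕ) (ms : ∀ i, Fin (ks i) → ℕ)
    (F : A n) (G : ∀ i, A (ks i)) (H : ∀ i j, A (ms i j)),
    comp (fun j => ms ((sigmaFinEquiv ks).symm j).1 ((sigmaFinEquiv ks).symm j).2)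
        (comp ks F G)
        (fun j => H ((sigmaFinEquiv ks).symm j).1 ((sigmaFinEquiv ks).symm j).2)
      = cast (congrArg A (sigmaFin_sum_eq ks ms).symm)
          (comp (fun i => ∑ j, ms i j) F (fun i => comp (ms i) (G i) (H i)))
  comp_add_left : ∀ {n : ℕ} (ks : Fin n → ℕ) (F F' : A n) (G : ∀ i, A (ks i)),
    comp ks (F + F') G = comp ks F G + comp ks F' G
  comp_smul_left : ∀ {n : ℕ} (ks : Fin n → ℕ) (c : k) (F : A n) (G : ∀ i, A (ks i)),
    comp ks (c • F) G = c • comp ks F G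
  comp_add_right : ∀ {n : ℕ} (ks : Fin n → ℕ) (F : A n) (G : ∀ i, A (ks i))
    (i : Fin n) (x : A (ks i)),
    comp ks F (Function.update G i (G i + x))
      = comp ks F G + comp ks F (Function.update G i x)
  comp_smul_right : ∀ {n : ℕ} (ks : Fin n → ℕ) (F : A n) (G : ∀ i, A (ks i))
    (i : Fin n) (c : k),
    comp ks F (Function.update G i (c • G i)) = c • comp ks F G

namespace LinearOperad

variable {k : Type} [Field k] {A : ℕ → Type u}
  [∀ n, AddCommGroup (A n)] [∀ n, Module k (A n)]

/-- Binary-style composition `S(F,G)`. -/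
def comp2 (O : LinearOperad k A) {a b : ℕ} (S : A 2) (F : A a) (G : A b) : A (a + b) :=
  cast (congrArg A
      (by simp [Fin.sum_univ_succ] :
        (∑ i, (Fin.cons a (Fin.cons b Fin.elim0) : Fin 2 → ℕ) i) = a + b))
    (O.comp (Fin.cons a (Fin.cons b Fin.elim0)) S
      (Fin.cons F (Fin.cons G (fun i => i.elim0))))


variable (O : LinearOperad k A) (S : A 2)

/-- The element `S₀³ = S(S,I)` of the product suboperad. -/
def prod3 : A 3 := O.comp2 S S O.unit

/-- `R(γ; a, 0₁) = (S+γ)(S+a, I) − S₀³`. -/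
def Rleft (γ a : A 2) : A 3 := O.comp2 (S + γ) (S + a) O.unit - O.prod3 S

/-- `R(γ; 0₁, a) = (S+γ)(I, S+a) − S₀³`. -/
def Rright (γ a : A 2) : A 3 := O.comp2 (S + γ) O.unit (S + a) - O.prod3 S

/-- The Hochschild differential `dγ = [0₂, γ]` of the deformation operad in degree 2:
`dγ = R(0₂; γ, 0₁) − R(0₂; 0₁, γ) + R(γ; 0₂, 0₁) − R(γ; 0₁, 0₂)`. -/
def hochDef2 (γ : A 2) : A 3 :=
  O.Rleft S 0 γ - O.Rright S 0 γ + (O.Rleft S γ 0 - O.Rright S γ 0)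

/-! Expanding `R` multilinearly, `R(γ; a, 0₁) = S(a, I) + γ(S, I) + γ(a, I)`, and, because
associativity of `S` gives `S(I, S) = S(S, I)`, also `R(γ; 0₁, a) = S(I, a) + γ(I, S) + γ(I, a)`.
So `R(γ; a, 0₁) − R(γ; 0₁, a)` is the sum of its part linear in `a`, its part linear in `γ`,
and the ambient quadratic term `γ(a, I) − γ(I, a)`; for `a = γ` the two linear parts make up
`dγ`. -/

lemma cast_congrArg_add {n m : ℕ} (e : n = m) (x y : A n) :
    cast (congrArg A e) (x + y) = cast (congrArg A e) x + cast (congrArg A e) y := by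
  subst e; rfl

lemma add_comp2 {a b : ℕ} (P P' : A 2) (F : A a) (G : A b) :
    O.comp2 (P + P') F G = O.comp2 P F G + O.comp2 P' F G := by
  unfold comp2
  rw [O.comp_add_left]
  exact cast_congrArg_add (by simp [Fin.sum_univ_succ]) _ _

lemma comp2_add_left {a b : ℕ} (P : A 2) (F F' : A a) (G : A b) :
    O.comp2 P (F + F') G = O.comp2 P F G + O.comp2 P F' G := by
  unfold comp2
  have h := O.comp_add_right (Fin.cons a (Fin.cons b Fin.elim0)) P
    (Fin.cons F (Fin.cons G (fun i => i.elim0))) 0 F'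
  erw [Fin.update_cons_zero, Fin.update_cons_zero] at h
  refine (congrArg (cast _) h).trans ?_
  exact cast_congrArg_add (by simp [Fin.sum_univ_succ]) _ _

lemma comp2_add_right {a b : ℕ} (P : A 2) (F : A a) (G G' : A b) :
    O.comp2 P F (G + G') = O.comp2 P F G + O.comp2 P F G' := by
  unfold comp2
  have h := O.comp_add_right (Fin.cons a (Fin.cons b Fin.elim0)) P
    (Fin.cons F (Fin.cons G (fun i => i.elim0))) (Fin.succ 0) G'
  erw [← Fin.cons_update, ← Fin.cons_update, Fin.update_cons_zero, Fin.update_cons_zero] at h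
  refine (congrArg (cast _) h).trans ?_
  exact cast_congrArg_add (by simp [Fin.sum_univ_succ]) _ _

lemma zero_comp2 {a b : ℕ} (F : A a) (G : A b) : O.comp2 (0 : A 2) F G = 0 := by
  simpa using O.add_comp2 0 0 F G

lemma comp2_zero_left {a b : ℕ} (P : A 2) (G : A b) : O.comp2 P (0 : A a) G = 0 := by
  simpa using O.comp2_add_left P 0 0 G

lemma comp2_zero_right {a b : ℕ} (P : A 2) (F : A a) : O.comp2 P F (0 : A b) = 0 := by
  simpa using O.comp2_add_right P F 0 0

lemma Rleft_eq (γ a : A 2) :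
    O.Rleft S γ a = O.comp2 S a O.unit + O.comp2 γ S O.unit + O.comp2 γ a O.unit := by
  simp only [Rleft, prod3, add_comp2, comp2_add_left]
  abel

lemma Rright_eq (hS : O.comp2 S O.unit S = O.comp2 S S O.unit) (γ a : A 2) :
    O.Rright S γ a = O.comp2 S O.unit a + O.comp2 γ O.unit S + O.comp2 γ O.unit a := by
  simp only [Rright, prod3, add_comp2, comp2_add_right, hS]
  abel

lemma Rleft_sub_Rright (hS : O.comp2 S O.unit S = O.comp2 S S O.unit) (γ a : A 2) :
    O.Rleft S γ a - O.Rright S γ a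
      = (O.Rleft S 0 a - O.Rright S 0 a) + (O.Rleft S γ 0 - O.Rright S γ 0)
        + O.comp2 γ a O.unit - O.comp2 γ O.unit a := by
  simp only [Rleft_eq, Rright_eq O S hS, zero_comp2, comp2_zero_left, comp2_zero_right]
  abel

theorem half_bracket_iff_maurer_cartan
    (hS : O.comp2 S O.unit S = O.comp2 S S O.unit)
    (γ : A 2) :
    O.Rleft S γ γ - O.Rright S γ γ = 0
      ↔ O.hochDef2 S γ + O.comp2 γ γ O.unit - O.comp2 γ O.unit γ = 0 := by
  rw [O.Rleft_sub_Rright S hS, hochDef2]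

end LinearOperad
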